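/- arXiv:2309.10289 — 2 statements merged into one kernel-verified Lean document; each statement's English description precedes it below -/
import Mathlib

section
/- Define f : (0,1] → ℝ by f(μ) = 2(2 − √μ)(ln 2 − ln(2 − √μ))/√μ − 1. Then f(1) = 2 ln 2 − 1, and for every λ ∈ (0,1]: ∫_λ^1 f(μ) dμ + (2√λ − λ)(1 − f(λ)) = 2(1 − ln 2). -/
open MeasureTheory Real

/-!
With `s = √μ` and `L(μ) = ln 2 - ln (2 - s)`, the function
`F(μ) = -2 (2 - s)² L(μ) - (2 - s)² - μ` is a primitive of `f` on `(0, 4)`. By the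
fundamental theorem of calculus the integral equation becomes
`F 1 - F λ + (2√λ - λ)(1 - f λ) = 2 (1 - ln 2)`, in which the logarithmic terms cancel and what remains is a polynomial identity in `√λ`.
-/

noncomputable def gainSplitting (μ : ℝ) : ℝ :=
  2 * (2 - √μ) * (log 2 - log (2 - √μ)) / √μ - 1

noncomputable def gainSplittingPrimitive (μ : ℝ) : ℝ :=
  -2 * (2 - √μ) ^ 2 * (log 2 - log (2 - √μ)) - (2 - √μ) ^ 2 - μ

section

variable {x : ℝ}

lemma hasDerivAt_gainSplittingPrimitive (hx : 0 < x) (hx2 : √x ≠ 2) :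
    HasDerivAt gainSplittingPrimitive (gainSplitting x) x := by
  have hs : √x ≠ 0 := (sqrt_pos.mpr hx).ne'
  have hs2 : 2 - √x ≠ 0 := sub_ne_zero.mpr hx2.symm
  have hsub : HasDerivAt (fun y => 2 - √y) (-(1 / (2 * √x))) x :=
    (hasDerivAt_sqrt hx.ne').const_sub 2
  have hlog := (hsub.log hs2).const_sub (log 2)
  have hsq := hsub.fun_pow 2
  refine ((((hsq.const_mul (-2)).fun_mul hlog).fun_sub hsq).fun_sub
    (hasDerivAt_id' x)).congr_deriv ?_
  simp only [gainSplitting]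
  field_simp
  ring

lemma continuousAt_gainSplitting (hx : 0 < x) (hx2 : √x ≠ 2) :
    ContinuousAt gainSplitting x := by
  have hs : √x ≠ 0 := (sqrt_pos.mpr hx).ne'
  have hs2 : 2 - √x ≠ 0 := sub_ne_zero.mpr hx2.symm
  unfold gainSplitting
  fun_prop (disch := assumption)

end

lemma integral_gainSplitting {a b : ℝ} (ha : 0 < a) (hab : a ≤ b) (hb : b < 4) :
    ∫ μ in a..b, gainSplitting μ = gainSplittingPrimitive b - gainSplittingPrimitive a := by
  have hmem : ∀ x ∈ Set.uIcc a b, 0 < x ∧ √x ≠ 2 := by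
    intro x hx
    rw [Set.uIcc_of_le hab] at hx
    refine ⟨ha.trans_le hx.1, ((sqrt_lt' two_pos).mpr ?_).ne⟩
    linarith [hx.2]
  refine intervalIntegral.integral_eq_sub_of_hasDerivAt
    (fun x hx => hasDerivAt_gainSplittingPrimitive (hmem x hx).1 (hmem x hx).2) ?_
  exact ContinuousOn.intervalIntegrable fun x hx =>
    (continuousAt_gainSplitting (hmem x hx).1 (hmem x hx).2).continuousWithinAt

lemma gainSplitting_one : gainSplitting 1 = 2 * log 2 - 1 := by
  norm_num [gainSplitting]

lemma gainSplittingPrimitive_one : gainSplittingPrimitive 1 = -2 * log 2 - 2 := by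
  norm_num [gainSplittingPrimitive]
  ring

lemma gainSplittingPrimitive_balance {l : ℝ} (hl : 0 < l) :
    gainSplittingPrimitive 1 - gainSplittingPrimitive l + (2 * √l - l) * (1 - gainSplitting l)
      = 2 * (1 - log 2) := by
  obtain ⟨s, hs, rfl⟩ : ∃ s, 0 < s ∧ l = s ^ 2 :=
    ⟨√l, sqrt_pos.mpr hl, (sq_sqrt hl.le).symm⟩
  rw [gainSplittingPrimitive_one, gainSplittingPrimitive, gainSplitting, sqrt_sq hs.le]
  field_simp
  ring

/-- The closed-form gain-splitting function
`f(μ) = 2(2 - √μ)(ln 2 - ln(2 - √μ))/√μ - 1` satisfies `f(1) = 2 ln 2 - 1`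
and the defining integral equation with `Γ = 2(1 - ln 2)`. -/
theorem gain_splitting_closed_form_integral_equation
    (f : ℝ → ℝ)
    (hf : ∀ μ ∈ Set.Ioc (0 : ℝ) 1,
      f μ = 2 * (2 - Real.sqrt μ) * (Real.log 2 - Real.log (2 - Real.sqrt μ))
              / Real.sqrt μ - 1) :
    f 1 = 2 * Real.log 2 - 1 ∧
      ∀ l ∈ Set.Ioc (0 : ℝ) 1,
        (∫ μ in l..1, f μ) + (2 * Real.sqrt l - l) * (1 - f l)
          = 2 * (1 - Real.log 2) := by
  have hfg : ∀ μ ∈ Set.Ioc (0 : ℝ) 1, f μ = gainSplitting μ := hf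
  refine ⟨(hfg 1 ⟨one_pos, le_rfl⟩).trans gainSplitting_one, fun l hl => ?_⟩
  have hint : ∫ μ in l..1, f μ = ∫ μ in l..1, gainSplitting μ :=
    intervalIntegral.integral_congr fun μ hμ => by
      rw [Set.uIcc_of_le hl.2] at hμ
      exact hfg μ ⟨hl.1.trans_le hμ.1, hμ.2⟩
  rw [hint, integral_gainSplitting hl.1 hl.2 (by norm_num), hfg l hl]
  exact gainSplittingPrimitive_balance hl.1
end

section
/- Reduction to the worst case q = ∞ (equal-probability case): let Γ ∈ (0,1], let g : [0,∞) → [0,1] be nondecreasing with 1 − g(0) ≤ Γ, and let ℓ ≥ 0. If ∫_0^ℓ e^{−θ} g(θ) dθ + (2 e^{−ℓ/2} − e^{−ℓ})(1 − g(ℓ)) ≥ Γ, then for every q ≥ 0: ∫_0^ℓ e^{−θ} g(θ) dθ + (1 − g(ℓ)) · ∫_0^∞ e^{−θ} ( min{q, θ} − (ℓ − θ)^+ )^+ dθ ≥ Γ · (1 − e^{−q}). -/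
/-!
Write `c = 1 - g ℓ`, so that `0 ≤ c ≤ 1 - g 0 ≤ Γ`. Since `min q θ = θ - (θ - q)⁺`, capping at `q`
loses at most `(θ - q)⁺` pointwise, and `∫₀^∞ e^{-θ} (θ - t)⁺ dθ = e^{-t}` for `t ≥ 0`. With
`(θ - (ℓ - θ)⁺)⁺ = 2 (θ - ℓ/2)⁺ - (θ - ℓ)⁺`, the finite-`q` integral is therefore at least
`2 e^{-ℓ/2} - e^{-ℓ} - e^{-q}`, and the loss `c e^{-q}` is at most `Γ e^{-q}`.
-/

open MeasureTheory Real Set Filter Topology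

section ExpNegMulPosPart

variable (t : ℝ)

lemma hasDerivAt_neg_exp_neg_mul_sub_add_one (x : ℝ) :
    HasDerivAt (fun x => -(exp (-x) * (x - t + 1))) (exp (-x) * (x - t)) x := by
  have hexp : HasDerivAt (fun x => exp (-x)) (-exp (-x)) x := by
    simpa using (hasDerivAt_neg x).exp
  have hlin : HasDerivAt (fun x => x - t + 1) 1 x := ((hasDerivAt_id' x).sub_const t).add_const 1
  exact (hexp.mul hlin).neg.congr_deriv (by ring)

lemma tendsto_neg_exp_neg_mul_sub_add_one :
    Tendsto (fun x => -(exp (-x) * (x - t + 1))) atTop (𝓝 0) := by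
  have h := ((tendsto_pow_mul_exp_neg_atTop_nhds_zero 1).add
    (tendsto_exp_neg_atTop_nhds_zero.const_mul (1 - t))).neg
  simp only [mul_zero, add_zero, neg_zero, pow_one] at h
  exact h.congr fun _ => by ring

lemma exp_neg_mul_sub_nonneg_on_Ioi : ∀ x ∈ Ioi t, 0 ≤ exp (-x) * (x - t) :=
  fun _ hx => mul_nonneg (exp_pos _).le (sub_nonneg.2 (mem_Ioi.1 hx).le)

lemma integrableOn_Ioi_exp_neg_mul_sub :
    IntegrableOn (fun x => exp (-x) * (x - t)) (Ioi t) :=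
  integrableOn_Ioi_deriv_of_nonneg' (fun x _ => hasDerivAt_neg_exp_neg_mul_sub_add_one t x)
    (exp_neg_mul_sub_nonneg_on_Ioi t) (tendsto_neg_exp_neg_mul_sub_add_one t)

lemma integral_Ioi_exp_neg_mul_sub : ∫ x in Ioi t, exp (-x) * (x - t) = exp (-t) := by
  rw [integral_Ioi_of_hasDerivAt_of_nonneg'
    (fun x _ => hasDerivAt_neg_exp_neg_mul_sub_add_one t x)
    (exp_neg_mul_sub_nonneg_on_Ioi t) (tendsto_neg_exp_neg_mul_sub_add_one t)]
  ring

variable {t}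

lemma exp_neg_mul_posPart_sub_eqOn_Ioi :
    EqOn (fun x => exp (-x) * max (x - t) 0) (fun x => exp (-x) * (x - t)) (Ioi t) :=
  fun x hx => by simp only [max_eq_left (sub_nonneg.2 (mem_Ioi.1 hx).le)]

lemma exp_neg_mul_posPart_sub_eq_zero_of_le {x : ℝ} (hx : x ≤ t) :
    exp (-x) * max (x - t) 0 = 0 := by
  rw [max_eq_right (sub_nonpos.2 hx), mul_zero]

lemma integrableOn_Ioi_zero_exp_neg_mul_posPart_sub :
    IntegrableOn (fun x => exp (-x) * max (x - t) 0) (Ioi 0) :=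
  ((integrableOn_Ioi_exp_neg_mul_sub t).congr_fun exp_neg_mul_posPart_sub_eqOn_Ioi.symm
    measurableSet_Ioi).of_forall_sdiff_eq_zero measurableSet_Ioi
    fun _ hx => exp_neg_mul_posPart_sub_eq_zero_of_le (not_lt.1 hx.2)

lemma integral_Ioi_zero_exp_neg_mul_posPart_sub (ht : 0 ≤ t) :
    ∫ x in Ioi 0, exp (-x) * max (x - t) 0 = exp (-t) := by
  rw [setIntegral_eq_of_subset_of_forall_sdiff_eq_zero measurableSet_Ioi (Ioi_subset_Ioi ht)
      fun _ hx => exp_neg_mul_posPart_sub_eq_zero_of_le (not_lt.1 hx.2),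
    setIntegral_congr_fun measurableSet_Ioi exp_neg_mul_posPart_sub_eqOn_Ioi,
    integral_Ioi_exp_neg_mul_sub]

end ExpNegMulPosPart

lemma posPart_sub_posPart_sub_eq {ℓ : ℝ} (hℓ : 0 ≤ ℓ) (θ : ℝ) :
    max (θ - max (ℓ - θ) 0) 0 = 2 * max (θ - ℓ / 2) 0 - max (θ - ℓ) 0 := by
  simp only [max_def]
  split_ifs <;> linarith

lemma posPart_sub_sub_posPart_le_posPart_min_sub (q θ b : ℝ) :
    max (θ - b) 0 - max (θ - q) 0 ≤ max (min q θ - b) 0 := by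
  simp only [max_def, min_def]
  split_ifs <;> linarith

section WorstCaseIntegral

variable {ℓ : ℝ}

lemma exp_neg_mul_posPart_sub_posPart_eq (hℓ : 0 ≤ ℓ) (θ : ℝ) :
    exp (-θ) * max (θ - max (ℓ - θ) 0) 0 =
      2 * (exp (-θ) * max (θ - ℓ / 2) 0) - exp (-θ) * max (θ - ℓ) 0 := by
  rw [posPart_sub_posPart_sub_eq hℓ]
  ring

lemma integrableOn_Ioi_zero_exp_neg_mul_posPart_sub_posPart (hℓ : 0 ≤ ℓ) :
    IntegrableOn (fun θ => exp (-θ) * max (θ - max (ℓ - θ) 0) 0) (Ioi 0) := by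
  simp_rw [exp_neg_mul_posPart_sub_posPart_eq hℓ]
  exact (integrableOn_Ioi_zero_exp_neg_mul_posPart_sub.const_mul 2).sub
    integrableOn_Ioi_zero_exp_neg_mul_posPart_sub

lemma integral_Ioi_zero_exp_neg_mul_posPart_sub_posPart (hℓ : 0 ≤ ℓ) :
    ∫ θ in Ioi 0, exp (-θ) * max (θ - max (ℓ - θ) 0) 0 = 2 * exp (-ℓ / 2) - exp (-ℓ) := by
  simp_rw [exp_neg_mul_posPart_sub_posPart_eq hℓ]
  rw [integral_sub (integrableOn_Ioi_zero_exp_neg_mul_posPart_sub.const_mul 2)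
      integrableOn_Ioi_zero_exp_neg_mul_posPart_sub, integral_const_mul,
    integral_Ioi_zero_exp_neg_mul_posPart_sub (by linarith),
    integral_Ioi_zero_exp_neg_mul_posPart_sub hℓ, neg_div]

lemma integrableOn_Ioi_zero_exp_neg_mul_posPart_min_sub_posPart (hℓ : 0 ≤ ℓ) (q : ℝ) :
    IntegrableOn (fun θ => exp (-θ) * max (min q θ - max (ℓ - θ) 0) 0) (Ioi 0) := by
  refine (integrableOn_Ioi_zero_exp_neg_mul_posPart_sub_posPart hℓ).mono'
    (by fun_prop) (Eventually.of_forall fun θ => ?_)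
  rw [norm_of_nonneg (mul_nonneg (exp_pos _).le (le_max_right _ _))]
  gcongr
  exact min_le_right q θ

lemma sub_exp_neg_le_integral_Ioi_zero_exp_neg_mul_posPart_min_sub_posPart (hℓ : 0 ≤ ℓ)
    {q : ℝ} (hq : 0 ≤ q) :
    2 * exp (-ℓ / 2) - exp (-ℓ) - exp (-q) ≤
      ∫ θ in Ioi 0, exp (-θ) * max (min q θ - max (ℓ - θ) 0) 0 := by
  have hint_infty := integrableOn_Ioi_zero_exp_neg_mul_posPart_sub_posPart hℓ
  have hint_tail := integrableOn_Ioi_zero_exp_neg_mul_posPart_sub (t := q)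
  calc 2 * exp (-ℓ / 2) - exp (-ℓ) - exp (-q)
      = ∫ θ in Ioi 0, (exp (-θ) * max (θ - max (ℓ - θ) 0) 0 - exp (-θ) * max (θ - q) 0) := by
        rw [integral_sub hint_infty hint_tail,
          integral_Ioi_zero_exp_neg_mul_posPart_sub_posPart hℓ,
          integral_Ioi_zero_exp_neg_mul_posPart_sub hq]
    _ ≤ ∫ θ in Ioi 0, exp (-θ) * max (min q θ - max (ℓ - θ) 0) 0 := by
        refine setIntegral_mono (hint_infty.sub hint_tail)
          (integrableOn_Ioi_zero_exp_neg_mul_posPart_min_sub_posPart hℓ q) fun θ => ?_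
        rw [← mul_sub]
        exact mul_le_mul_of_nonneg_left (posPart_sub_sub_posPart_le_posPart_min_sub q θ _)
          (exp_pos _).le

end WorstCaseIntegral

theorem worst_case_q_infty_equal_prob_general
    (Γ : ℝ)
    (g : ℝ → ℝ) (hg : MonotoneOn g (Set.Ici 0))
    (hrange : ∀ x ∈ Set.Ici (0 : ℝ), g x ∈ Set.Icc (0 : ℝ) 1)
    (hg0 : 1 - g 0 ≤ Γ) (ℓ : ℝ) (hℓ : 0 ≤ ℓ)
    (hq_infty : (∫ θ in (0 : ℝ)..ℓ, Real.exp (-θ) * g θ)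
        + (2 * Real.exp (-ℓ / 2) - Real.exp (-ℓ)) * (1 - g ℓ) ≥ Γ) :
    ∀ q ≥ (0 : ℝ),
      (∫ θ in (0 : ℝ)..ℓ, Real.exp (-θ) * g θ)
        + (1 - g ℓ) *
          ∫ θ in Set.Ioi (0 : ℝ),
            Real.exp (-θ) * max (min q θ - max (ℓ - θ) 0) 0
      ≥ Γ * (1 - Real.exp (-q)) := by
  intro q hq
  have hc_nonneg : 0 ≤ 1 - g ℓ := sub_nonneg.2 (hrange ℓ hℓ).2
  have hc_le : 1 - g ℓ ≤ Γ := (sub_le_sub_left (hg self_mem_Ici hℓ hℓ) 1).trans hg0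
  have hF := mul_le_mul_of_nonneg_left
    (sub_exp_neg_le_integral_Ioi_zero_exp_neg_mul_posPart_min_sub_posPart hℓ hq) hc_nonneg
  have hloss := mul_le_mul_of_nonneg_right hc_le (exp_pos (-q)).le
  linarith

/-- Reduction to the worst case `q = ∞` in the equal-probability analysis of
Stochastic Balance. -/
theorem worst_case_q_infty_equal_prob
    (Γ : ℝ) (hΓ : Γ ∈ Set.Ioc (0 : ℝ) 1)
    (g : ℝ → ℝ) (hg : MonotoneOn g (Set.Ici 0))
    (hrange : ∀ x ∈ Set.Ici (0 : ℝ), g x ∈ Set.Icc (0 : ℝ) 1)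
    (hg0 : 1 - g 0 ≤ Γ) (ℓ : ℝ) (hℓ : 0 ≤ ℓ)
    (hq_infty : (∫ θ in (0 : ℝ)..ℓ, Real.exp (-θ) * g θ)
        + (2 * Real.exp (-ℓ / 2) - Real.exp (-ℓ)) * (1 - g ℓ) ≥ Γ) :
    ∀ q ≥ (0 : ℝ),
      (∫ θ in (0 : ℝ)..ℓ, Real.exp (-θ) * g θ)
        + (1 - g ℓ) *
          ∫ θ in Set.Ioi (0 : ℝ),
            Real.exp (-θ) * max (min q θ - max (ℓ - θ) 0) 0
      ≥ Γ * (1 - Real.exp (-q)) :=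
  worst_case_q_infty_equal_prob_general Γ g hg hrange hg0 ℓ hℓ hq_infty
end
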